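/- arXiv:math/0507128 — 2 statements merged into one kernel-verified Lean document; each statement's English description precedes it below -/
import Mathlib

section
/- Let X be a set of primes and G_X = (ℤ[{1/p : p ∈ X}], +) the additive group of the localization. Then for a prime q, the q-height of 1 in G_X is ∞ if q ∈ X and 0 if q ∉ X. Consequently, G_X ≅ G_Y as abelian groups implies X = Y. -/
/-!
For `q ∉ Z`, every element of `ℤ[1/p : p ∈ Z]` is a `q`-adic integer, so `q ^ k • b = a` forces
`‖a‖_q ≤ q⁻ᵏ`. Hence `1` has `q`-height `0` and every nonzero element has finite `q`-height,
while for `q ∈ Z` the identities `1 = q ^ k • q⁻ᵏ` give `1` infinite `q`-height. An additive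
isomorphism preserves heights and sends `1` to a nonzero element, so it cannot exist unless the
two sets of primes agree.
-/

/-- The `p`-height of an element `a` of an additive group: the supremum (in `ℕ∞`) of the
`k` such that `a` is divisible by `p^k`. -/
noncomputable def pHeight {G : Type*} [AddCommGroup G] (p : ℕ) (a : G) : ℕ∞ :=
  sSup ((fun k : ℕ => (k : ℕ∞)) '' {k : ℕ | ∃ b : G, (p ^ k : ℕ) • b = a})

section pHeight

variable {G H : Type*} [AddCommGroup G] [AddCommGroup H] {p : ℕ}

theorem pHeight_eq_top_of_forall {a : G} (h : ∀ k : ℕ, ∃ b : G, (p ^ k : ℕ) • b = a) :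
    pHeight p a = ⊤ :=
  ENat.eq_top_iff_forall_ge.mpr fun k => le_sSup ⟨k, h k, rfl⟩

theorem pHeight_le_of_forall {a : G} {n : ℕ}
    (h : ∀ (k : ℕ) (b : G), (p ^ k : ℕ) • b = a → k ≤ n) : pHeight p a ≤ n :=
  sSup_le <| by
    rintro _ ⟨k, ⟨b, hb⟩, rfl⟩
    exact Nat.cast_le.mpr (h k b hb)

theorem pHeight_map_addEquiv (e : G ≃+ H) (a : G) : pHeight p (e a) = pHeight p a := by
  unfold pHeight
  congr 3
  ext k
  exact ⟨fun ⟨b, hb⟩ => ⟨e.symm b, by rw [← map_nsmul, hb, e.symm_apply_apply]⟩,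
    fun ⟨b, hb⟩ => ⟨e b, by rw [← map_nsmul, hb]⟩⟩

end pHeight

section Padic

variable {q : ℕ} [Fact q.Prime]

theorem norm_le_one_of_mem_closure_inv {Z : Set ℕ} (hZ : ∀ p ∈ Z, q.Coprime p) {x : ℚ}
    (hx : x ∈ Subring.closure {x : ℚ | ∃ p ∈ Z, x = (p : ℚ)⁻¹}) : ‖(x : ℚ_[q])‖ ≤ 1 := by
  suffices Subring.closure {x : ℚ | ∃ p ∈ Z, x = (p : ℚ)⁻¹} ≤
      (PadicInt.subring q).comap (Rat.castHom ℚ_[q]) from this hx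
  rw [Subring.closure_le]
  rintro _ ⟨p, hp, rfl⟩
  simp [Padic.norm_natCast_eq_one_iff.mpr (hZ p hp)]

theorem inv_natCast_lt_one_of_prime : (q : ℝ)⁻¹ < 1 :=
  inv_lt_one_of_one_lt₀ (mod_cast (Fact.out : q.Prime).one_lt)

variable {R : Subring ℚ} (hR : ∀ x ∈ R, ‖(x : ℚ_[q])‖ ≤ 1)
include hR

theorem norm_le_of_nsmul_eq {k : ℕ} {a b : R} (h : (q ^ k : ℕ) • b = a) :
    ‖((a : ℚ) : ℚ_[q])‖ ≤ (q : ℝ)⁻¹ ^ k := by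
  rw [← h, AddSubmonoidClass.coe_nsmul, nsmul_eq_mul]
  push_cast
  rw [norm_mul, norm_pow, Padic.norm_p]
  exact mul_le_of_le_one_right (by positivity) (hR b b.2)

theorem pHeight_le_of_inv_pow_lt_norm {a : R} {n : ℕ}
    (h : (q : ℝ)⁻¹ ^ (n + 1) < ‖((a : ℚ) : ℚ_[q])‖) : pHeight q a ≤ n := by
  refine pHeight_le_of_forall fun k b hb => ?_
  by_contra! hk
  have hq := inv_natCast_lt_one_of_prime (q := q)
  have := (norm_le_of_nsmul_eq hR hb).trans (pow_le_pow_of_le_one (by positivity) hq.le hk)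
  exact (h.trans_le this).false

theorem pHeight_one_eq_zero : pHeight q (1 : R) = 0 :=
  nonpos_iff_eq_zero.mp <| pHeight_le_of_inv_pow_lt_norm hR <| by
    simpa using inv_natCast_lt_one_of_prime

theorem pHeight_ne_top {a : R} (ha : a ≠ 0) : pHeight q a ≠ ⊤ := by
  have hq := inv_natCast_lt_one_of_prime (q := q)
  have hpos : 0 < ‖((a : ℚ) : ℚ_[q])‖ := norm_pos_iff.mpr <| by exact_mod_cast ha
  obtain ⟨n, hn⟩ := exists_pow_lt_of_lt_one hpos hq
  exact ne_top_of_le_ne_top (ENat.natCast_ne_top n) <| pHeight_le_of_inv_pow_lt_norm hR <|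
    (pow_le_pow_of_le_one (by positivity) hq.le n.le_succ).trans_lt hn

end Padic

theorem pHeight_one_eq_top_of_inv_mem {q : ℕ} {R : Subring ℚ} (hq : q ≠ 0)
    (h : (q : ℚ)⁻¹ ∈ R) : pHeight q (1 : R) = ⊤ :=
  pHeight_eq_top_of_forall fun k => ⟨⟨(q : ℚ)⁻¹ ^ k, pow_mem h k⟩, by
    ext
    simp [hq]⟩

/-- For a set `X` of primes let `G_X` be the additive group of
`ℤ[{1/p : p ∈ X}]`. For a prime `q`, the `q`-height of `1` in `G_X` is `∞` if `q ∈ X` and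
`0` if `q ∉ X`; consequently `G_X ≅ G_Y` (as abelian groups) implies `X = Y`. -/
theorem localization_addGroup_heights
    (S : Set ℕ → Subring ℚ)
    (hS : ∀ Z : Set ℕ, S Z = Subring.closure {x : ℚ | ∃ p ∈ Z, x = ((p : ℕ) : ℚ)⁻¹}) :
    (∀ (X : Set ℕ), (∀ p ∈ X, Nat.Prime p) → ∀ q : ℕ, q.Prime →
        ((q ∈ X → pHeight q (1 : S X) = ⊤) ∧ (q ∉ X → pHeight q (1 : S X) = 0))) ∧
      (∀ (X Y : Set ℕ), (∀ p ∈ X, Nat.Prime p) → (∀ p ∈ Y, Nat.Prime p) →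
        Nonempty ((S X) ≃+ (S Y)) → X = Y) := by
  have norm_le_one : ∀ Z : Set ℕ, (∀ p ∈ Z, p.Prime) → ∀ (q : ℕ) [Fact q.Prime], q ∉ Z →
      ∀ x ∈ S Z, ‖(x : ℚ_[q])‖ ≤ 1 := by
    intro Z hZ q hq hqZ x hx
    rw [hS] at hx
    refine norm_le_one_of_mem_closure_inv (fun p hp => ?_) hx
    exact (Nat.coprime_primes hq.out (hZ p hp)).mpr (by rintro rfl; exact hqZ hp)
  have top_of_mem : ∀ Z q, q.Prime → q ∈ Z → pHeight q (1 : S Z) = ⊤ := fun Z q hq hqZ =>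
    pHeight_one_eq_top_of_inv_mem hq.ne_zero <| hS Z ▸ Subring.subset_closure ⟨q, hqZ, rfl⟩
  have subset : ∀ X Y : Set ℕ, (∀ p ∈ X, p.Prime) → (∀ p ∈ Y, p.Prime) → (S X ≃+ S Y) →
      X ⊆ Y := by
    intro X Y hX hY e q hqX
    by_contra hqY
    have := Fact.mk (hX q hqX)
    refine pHeight_ne_top (norm_le_one Y hY q hqY) (e.map_ne_zero_iff.mpr one_ne_zero) ?_
    rw [pHeight_map_addEquiv, top_of_mem X q (hX q hqX) hqX]
  refine ⟨fun X hX q hq => ⟨top_of_mem X q hq, fun hqX => ?_⟩, fun X Y hX hY ⟨e⟩ => ?_⟩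
  · have := Fact.mk hq
    exact pHeight_one_eq_zero (norm_le_one X hX q hqX)
  · exact (subset X Y hX hY e).antisymm (subset Y X hY hX e.symm)
end

section
/- If χ and χ' are two characteristics (functions from primes to ℕ ∪ {∞}) of nonzero elements a, a' of the same torsion-free abelian group of rank 1 (a subgroup of ℚ), then χ and χ' are equivalent: they differ at only finitely many primes, and at every prime where they differ both values are finite. -/
section pHeight

variable {G : Type*} [AddCommGroup G] {p : ℕ}

theorem le_pHeight_iff {a : G} {k : ℕ} :
    (k : ℕ∞) ≤ pHeight p a ↔ ∃ b : G, (p ^ k : ℕ) • b = a := by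
  refine ⟨fun hk => ?_, fun ⟨b, hb⟩ => le_sSup ⟨k, ⟨b, hb⟩, rfl⟩⟩
  cases k with
  | zero => exact ⟨a, by simp⟩
  | succ j =>
    have hj : (j : ℕ∞) < pHeight p a := lt_of_lt_of_le (by exact_mod_cast j.lt_succ_self) hk
    obtain ⟨_, ⟨m, ⟨b, hb⟩, rfl⟩, hjm⟩ := lt_sSup_iff.mp hj
    refine ⟨(p ^ (m - (j + 1)) : ℕ) • b, ?_⟩
    rw [← mul_smul, ← pow_add, Nat.add_sub_cancel' (Nat.cast_lt.mp hjm), hb]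

theorem pHeight_eq_top_iff {a : G} : pHeight p a = ⊤ ↔ ∀ k : ℕ, ∃ b : G, (p ^ k : ℕ) • b = a := by
  simp only [ENat.eq_top_iff_forall_ge, le_pHeight_iff]

theorem pHeight_le_pHeight_zsmul (a : G) (n : ℤ) : pHeight p a ≤ pHeight p (n • a) := by
  refine sSup_le_sSup (Set.image_mono fun k ⟨b, hb⟩ => ⟨n • b, ?_⟩)
  rw [smul_comm, hb]

theorem pHeight_zsmul_of_not_dvd (hp : p.Prime) {n : ℤ} (hn : ¬ (p : ℤ) ∣ n) (a : G) :
    pHeight p (n • a) = pHeight p a := by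
  refine le_antisymm ?_ (pHeight_le_pHeight_zsmul a n)
  refine sSup_le_sSup (Set.image_mono fun k ⟨b, hb⟩ => ?_)
  obtain ⟨u, v, huv⟩ : IsCoprime ((p : ℤ) ^ k) n :=
    ((Nat.prime_iff_prime_int.mp hp).coprime_iff_not_dvd.mpr hn).pow_left
  refine ⟨u • a + v • b, ?_⟩
  have hb' : ((p : ℤ) ^ k) • b = n • a := by rw [← hb, ← natCast_zsmul]; push_cast; rfl
  calc (p ^ k : ℕ) • (u • a + v • b) = ((p : ℤ) ^ k) • (u • a + v • b) := by
        rw [← natCast_zsmul]; push_cast; rfl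
    _ = (u * (p : ℤ) ^ k + v * n) • a := by
        rw [smul_add, smul_comm _ v, hb', smul_smul, smul_smul, add_smul, mul_comm]
    _ = a := by rw [huv, one_smul]

theorem pHeight_eq_top_of_pow_nsmul [IsAddTorsionFree G] (hp : p ≠ 0) {v : ℕ} {a : G}
    (h : pHeight p ((p ^ v : ℕ) • a) = ⊤) : pHeight p a = ⊤ := by
  rw [pHeight_eq_top_iff] at h ⊢
  intro k
  obtain ⟨b, hb⟩ := h (k + v)
  refine ⟨b, nsmul_right_injective (pow_ne_zero v hp) ?_⟩
  simpa only [← mul_smul, ← pow_add, add_comm v k] using hb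

theorem pHeight_zsmul_eq_top_iff [IsAddTorsionFree G] (hp : p.Prime) {n : ℤ} (hn : n ≠ 0)
    (a : G) : pHeight p (n • a) = ⊤ ↔ pHeight p a = ⊤ := by
  refine ⟨fun h => ?_, fun h => top_le_iff.mp (h ▸ pHeight_le_pHeight_zsmul a n)⟩
  obtain ⟨c, hnc, hc⟩ := (Int.finiteMultiplicity_iff (a := (p : ℤ)).mpr
    ⟨by simpa using hp.ne_one, hn⟩).exists_eq_pow_mul_and_not_dvd
  rw [← pHeight_zsmul_of_not_dvd hp hc]
  rw [hnc, mul_smul, ← Int.natCast_pow, natCast_zsmul] at h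
  exact pHeight_eq_top_of_pow_nsmul hp.ne_zero h

theorem pHeight_equivalent_of_zsmul_eq [IsAddTorsionFree G] {a a' : G} {m n : ℤ} (hm : m ≠ 0)
    (hn : n ≠ 0) (h : m • a = n • a') :
    {p : ℕ | p.Prime ∧ pHeight p a ≠ pHeight p a'}.Finite ∧
      ∀ p : ℕ, p.Prime → pHeight p a ≠ pHeight p a' →
        pHeight p a < ⊤ ∧ pHeight p a' < ⊤ := by
  constructor
  · refine (m * n).natAbs.primeFactors.finite_toSet.subset fun p ⟨hp, hne⟩ => ?_
    refine Nat.mem_primeFactors.mpr ⟨hp, Int.natCast_dvd.mp ?_, by simp [hm, hn]⟩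
    by_contra hdvd
    have hpm : ¬ (p : ℤ) ∣ m := fun hd => hdvd (hd.mul_right n)
    have hpn : ¬ (p : ℤ) ∣ n := fun hd => hdvd (hd.mul_left m)
    exact hne (by rw [← pHeight_zsmul_of_not_dvd hp hpm, h, pHeight_zsmul_of_not_dvd hp hpn])
  · intro p hp hne
    have htop : pHeight p a = ⊤ ↔ pHeight p a' = ⊤ := by
      rw [← pHeight_zsmul_eq_top_iff hp hm, h, pHeight_zsmul_eq_top_iff hp hn]
    simp only [lt_top_iff_ne_top]
    exact ⟨fun ha => hne (ha.trans (htop.mp ha).symm),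
      fun ha' => hne ((htop.mpr ha').trans ha'.symm)⟩

end pHeight

theorem AddSubgroup.exists_zsmul_eq_zsmul_of_ne_zero {G : AddSubgroup ℚ} {a a' : G} (ha : a ≠ 0)
    (ha' : a' ≠ 0) : ∃ m n : ℤ, m ≠ 0 ∧ n ≠ 0 ∧ m • a = n • a' := by
  have hq : (a : ℚ) ≠ 0 := by simpa using ha
  have hq' : (a' : ℚ) ≠ 0 := by simpa using ha'
  set r : ℚ := (a' : ℚ) / a
  refine ⟨r.num, r.den, Rat.num_ne_zero.mpr (div_ne_zero hq' hq), by simp, Subtype.ext ?_⟩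
  simp only [AddSubgroup.coe_zsmul, zsmul_eq_mul, Int.cast_natCast]
  rw [← Rat.mul_den_eq_num r, mul_comm r, mul_assoc, div_mul_cancel₀ _ hq]

theorem characteristics_equivalent_general
    (G : AddSubgroup ℚ) (a a' : G) (ha : a ≠ 0) (ha' : a' ≠ 0) :
    {p : ℕ | p.Prime ∧ pHeight p a ≠ pHeight p a'}.Finite ∧
      ∀ p : ℕ, p.Prime → pHeight p a ≠ pHeight p a' →
        pHeight p a < ⊤ ∧ pHeight p a' < ⊤ := by
  obtain ⟨m, n, hm, hn, h⟩ := AddSubgroup.exists_zsmul_eq_zsmul_of_ne_zero ha ha'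
  exact pHeight_equivalent_of_zsmul_eq hm hn h

/-- The characteristics of two nonzero elements of the same rank-1
torsion-free abelian group (a nonzero subgroup of `ℚ`) are equivalent: they differ at only
finitely many primes, and where they differ both values are finite. -/
theorem characteristics_equivalent
    (G : AddSubgroup ℚ) (hG : G ≠ ⊥) (a a' : G) (ha : a ≠ 0) (ha' : a' ≠ 0) :
    {p : ℕ | p.Prime ∧ pHeight p a ≠ pHeight p a'}.Finite ∧
      ∀ p : ℕ, p.Prime → pHeight p a ≠ pHeight p a' →
        pHeight p a < ⊤ ∧ pHeight p a' < ⊤ :=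
  characteristics_equivalent_general G a a' ha ha'
end
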